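/- arXiv:2506.03974 — 3 statements merged into one kernel-verified Lean document; each statement's English description precedes it below -/
import Mathlib

section
/- The convex conjugate of g equals the positive part of the shifted conjugate of h: for all v ∈ ℝ, g*(v) = max(h*(v) − λ, 0). -/
noncomputable section

open Set
open scoped Classical

/-- Convex (Fenchel) conjugate of an extended-real-valued function on `ℝ`. -/
def conj (f : ℝ → EReal) (v : ℝ) : EReal := ⨆ x : ℝ, ((v * x : ℝ) : EReal) - f x

/-- Convex subdifferential of an extended-real-valued function on `ℝ`. -/
def subdiff (f : ℝ → EReal) (x : ℝ) : Set ℝ :=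
  {d : ℝ | ∀ y : ℝ, f x + ((d * (y - x) : ℝ) : EReal) ≤ f y}

/-- Convexity of an extended-real-valued function on `ℝ`. -/
def EConvexOn (f : ℝ → EReal) : Prop :=
  ∀ x y a b : ℝ, 0 ≤ a → 0 ≤ b → a + b = 1 →
    f (a * x + b * y) ≤ (a : EReal) * f x + (b : EReal) * f y

/-- The ℓ₀-penalized regularizer `g(x) = λ‖x‖₀ + h(x)`. -/
def gfun (lam : ℝ) (h : ℝ → EReal) (x : ℝ) : EReal :=
  (if x = 0 then (0 : EReal) else (lam : EReal)) + h x

/-- The parameter `τ = sup {v ≥ 0 : h*(v) ≤ λ}` (as a real number). -/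
def tau (lam : ℝ) (h : ℝ → EReal) : ℝ :=
  sSup {v : ℝ | 0 ≤ v ∧ conj h v ≤ (lam : EReal)}

/-- The parameter `μ = sup {x ≥ 0 : x ∈ ∂h*(τ)}` if `∂h*(τ) ≠ ∅`, else `+∞`. -/
def mu (lam : ℝ) (h : ℝ → EReal) : EReal :=
  if (subdiff (conj h) (tau lam h)).Nonempty then
    sSup ((fun x : ℝ => (x : EReal)) '' {x : ℝ | 0 ≤ x ∧ x ∈ subdiff (conj h) (tau lam h)})
  else ⊤

/-- The parameter `β = sup {v ≥ 0 : v ∈ dom h*}`. -/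
def beta (h : ℝ → EReal) : EReal :=
  sSup ((fun v : ℝ => (v : EReal)) '' {v : ℝ | 0 ≤ v ∧ conj h v ≠ ⊤})

/-- The parameter `κ = sup {v ≥ 0 : v ∈ ∂h(μ)}` if `μ < +∞`, else `+∞`. -/
def kappa (lam : ℝ) (h : ℝ → EReal) : EReal :=
  if mu lam h ≠ ⊤ then
    sSup ((fun v : ℝ => (v : EReal)) '' {v : ℝ | 0 ≤ v ∧ v ∈ subdiff h (mu lam h).toReal})
  else ⊤

/-- The set of minimizers of `u ↦ ½(u − v)² + γ·ω(u)`, i.e. `prox_{γω}(v)`. -/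
def proxSet (γ : ℝ) (ω : ℝ → EReal) (v : ℝ) : Set ℝ :=
  {u : ℝ | ∀ w : ℝ,
    ((2⁻¹ * (u - v) ^ 2 : ℝ) : EReal) + (γ : EReal) * ω u ≤
      ((2⁻¹ * (w - v) ^ 2 : ℝ) : EReal) + (γ : EReal) * ω w}

/-!
Off the origin `g = λ + h`, so `v x - g x = (v x - h x) - λ` there, while at the origin both
`v·0 - g 0` and `v·0 - h 0` vanish. Taking suprema, `g*(v)` is the larger of `0` and
`h*(v) - λ`; the value `0` coming from the origin in `h*(v)` is harmless because
`0 - λ < 0`.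
-/

theorem EReal.coe_sub_coe_add (a c : ℝ) (b : EReal) :
    (a : EReal) - (c + b) = a - b - c := by
  induction b with
  | bot => simp
  | coe r => norm_cast; ring
  | top => rw [EReal.coe_add_top, EReal.sub_top, EReal.bot_sub]

theorem sub_le_conj (f : ℝ → EReal) (v x : ℝ) : ((v * x : ℝ) : EReal) - f x ≤ conj f v :=
  le_iSup (fun x : ℝ => ((v * x : ℝ) : EReal) - f x) x

theorem conj_nonneg_of_map_zero {f : ℝ → EReal} (hf : f 0 = 0) (v : ℝ) : 0 ≤ conj f v := by
  simpa [hf] using sub_le_conj f v 0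

theorem gfun_zero (lam : ℝ) {h : ℝ → EReal} (h0 : h 0 = 0) : gfun lam h 0 = 0 := by
  simp [gfun, h0]

theorem coe_mul_sub_gfun (lam : ℝ) (h : ℝ → EReal) (v : ℝ) {x : ℝ} (hx : x ≠ 0) :
    ((v * x : ℝ) : EReal) - gfun lam h x = ((v * x : ℝ) : EReal) - h x - lam := by
  rw [gfun, if_neg hx, EReal.coe_sub_coe_add]

theorem conj_gfun_le (lam : ℝ) {h : ℝ → EReal} (h0 : h 0 = 0) (v : ℝ) :
    conj (gfun lam h) v ≤ max (conj h v - lam) 0 := by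
  refine iSup_le fun x => ?_
  rcases eq_or_ne x 0 with rfl | hx
  · simp [gfun_zero lam h0]
  · rw [coe_mul_sub_gfun lam h v hx]
    exact (EReal.sub_le_sub (sub_le_conj h v x) le_rfl).trans (le_max_left _ _)

theorem conj_sub_le_conj_gfun {lam : ℝ} (hlam : 0 < lam) {h : ℝ → EReal} (h0 : h 0 = 0)
    (v : ℝ) : conj h v - lam ≤ conj (gfun lam h) v := by
  have hg0 : 0 ≤ conj (gfun lam h) v := conj_nonneg_of_map_zero (gfun_zero lam h0) v
  refine EReal.sub_le_of_le_add (iSup_le fun x => ?_)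
  rcases eq_or_ne x 0 with rfl | hx
  · simpa [h0] using add_nonneg hg0 (EReal.coe_nonneg.mpr hlam.le)
  · calc ((v * x : ℝ) : EReal) - h x
        = ((v * x : ℝ) : EReal) - gfun lam h x + lam := by
          rw [coe_mul_sub_gfun lam h v hx, EReal.sub_add_cancel]
      _ ≤ conj (gfun lam h) v + lam := by gcongr; exact sub_le_conj _ v x

theorem conj_gfun_eq_posPart_general (lam : ℝ) (h : ℝ → EReal) (hlam : 0 < lam)
    (h0 : h 0 = 0) :
    ∀ v : ℝ, conj (gfun lam h) v = max (conj h v - (lam : EReal)) 0 := fun v =>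
  (conj_gfun_le lam h0 v).antisymm <|
    max_le (conj_sub_le_conj_gfun hlam h0 v) (conj_nonneg_of_map_zero (gfun_zero lam h0) v)

theorem conj_gfun_eq_posPart (lam : ℝ) (h : ℝ → EReal) (hlam : 0 < lam)
    (h0 : h 0 = 0) (hge : ∀ x : ℝ, 0 ≤ h x)
    (hlsc : LowerSemicontinuous h) (hconv : EConvexOn h)
    (hdom : ∃ x : ℝ, 0 < x ∧ h x ≠ ⊤) :
    ∀ v : ℝ, conj (gfun lam h) v = max (conj h v - (lam : EReal)) 0 :=
  conj_gfun_eq_posPart_general lam h hlam h0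
end
end

section
/- Under the blanket assumptions and evenness of h, g*(v) = 0 if and only if |v| ≤ τ, where τ = sup{v ≥ 0 : h*(v) ≤ λ}. -/
noncomputable section

open Set
open scoped Classical

/-!
Since `g(0) = 0`, always `g*(v) ≥ 0`, and `g*(v) ≤ 0` says `v x ≤ λ + h(x)` for all `x ≠ 0`; as
`h(0) = 0 ≤ λ` this is the same as `h*(v) ≤ λ`. For `v ≥ 0` only `x > 0` in `dom h` constrain
this, so `{v ≥ 0 : h*(v) ≤ λ}` is the interval `[0, inf_{x > 0} (λ + h(x)) / x]`, whose supremum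
is `τ`. Evenness of `h` makes `h*` even, which reduces `v` to `|v|`.
-/

/-- Slopes of the chords from `(0, -λ)` to the points of the graph of `h` with `x > 0`. -/
def chordSlopes (lam : ℝ) (h : ℝ → EReal) : Set ℝ :=
  (fun x => (lam + (h x).toReal) / x) '' {x | 0 < x ∧ h x ≠ ⊤}

section

variable {lam v : ℝ} {f h : ℝ → EReal}

lemma conj_le_coe_iff {c : ℝ} :
    conj f v ≤ c ↔ ∀ x, ((v * x : ℝ) : EReal) ≤ c + f x := by
  refine iSup_le_iff.trans (forall_congr' fun x => EReal.sub_le_iff_le_add ?_ ?_)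
  · exact Or.inr (EReal.coe_ne_top c)
  · exact Or.inr (EReal.coe_ne_bot c)

lemma conj_neg_of_even (heven : ∀ x, f (-x) = f x) (v : ℝ) : conj f (-v) = conj f v := by
  unfold conj
  rw [← (Equiv.neg ℝ).iSup_comp]
  simp [heven]

lemma conj_abs_of_even (heven : ∀ x, f (-x) = f x) (v : ℝ) : conj f |v| = conj f v := by
  rcases abs_choice v with hv | hv <;> rw [hv]
  exact conj_neg_of_even heven v

lemma conj_gfun_eq_zero_iff_conj_le (hlam : 0 ≤ lam) (h0 : h 0 = 0) :
    conj (gfun lam h) v = 0 ↔ conj h v ≤ lam := by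
  have hgfun0 : gfun lam h 0 = 0 := by simp [gfun, h0]
  have hnonneg : 0 ≤ conj (gfun lam h) v := le_iSup_of_le 0 (by simp [hgfun0])
  have hpointwise : ∀ x, ((v * x : ℝ) : EReal) ≤ ((0 : ℝ) : EReal) + gfun lam h x ↔
      ((v * x : ℝ) : EReal) ≤ lam + h x := by
    intro x
    rcases eq_or_ne x 0 with rfl | hx
    · simp [hgfun0, h0, hlam]
    · simp [gfun, hx]
  rw [← hnonneg.ge_iff_eq', ← EReal.coe_zero, conj_le_coe_iff, conj_le_coe_iff]
  exact forall_congr' hpointwise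

lemma coe_mul_le_coe_add_iff_le_div {x c : ℝ} {a : EReal} (hx : 0 < x) (ha : a ≠ ⊤)
    (ha' : a ≠ ⊥) : ((v * x : ℝ) : EReal) ≤ c + a ↔ v ≤ (c + a.toReal) / x := by
  rw [le_div_iff₀ hx, ← EReal.coe_le_coe_iff, EReal.coe_add, EReal.coe_toReal ha ha']

lemma conj_le_iff_forall_le_chordSlopes (hlam : 0 ≤ lam) (hge : ∀ x, 0 ≤ h x) (hv : 0 ≤ v) :
    conj h v ≤ lam ↔ ∀ s ∈ chordSlopes lam h, v ≤ s := by
  have hne_bot : ∀ x, h x ≠ ⊥ := fun x hx => by simpa [hx] using hge x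
  rw [conj_le_coe_iff, chordSlopes, forall_mem_image]
  constructor
  · rintro H x ⟨hx, htop⟩
    exact (coe_mul_le_coe_add_iff_le_div hx htop (hne_bot x)).1 (H x)
  · intro H x
    rcases le_or_gt x 0 with hx | hx
    · have hvx : ((v * x : ℝ) : EReal) ≤ 0 :=
        EReal.coe_nonpos.2 (mul_nonpos_of_nonneg_of_nonpos hv hx)
      exact hvx.trans (add_nonneg (EReal.coe_nonneg.2 hlam) (hge x))
    · by_cases htop : h x = ⊤
      · simp [htop, EReal.add_top_of_ne_bot (EReal.coe_ne_bot lam)]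
      · exact (coe_mul_le_coe_add_iff_le_div hx htop (hne_bot x)).2 (H ⟨hx, htop⟩)

lemma chordSlopes_nonneg (hlam : 0 ≤ lam) (hge : ∀ x, 0 ≤ h x) :
    ∀ s ∈ chordSlopes lam h, 0 ≤ s := by
  rintro _ ⟨x, ⟨hx, -⟩, rfl⟩
  exact div_nonneg (add_nonneg hlam (EReal.toReal_nonneg (hge x))) hx.le

lemma chordSlopes_nonempty (hdom : ∃ x, 0 < x ∧ h x ≠ ⊤) : (chordSlopes lam h).Nonempty :=
  let ⟨_, hx⟩ := hdom
  ⟨_, mem_image_of_mem _ hx⟩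

lemma conj_le_iff_le_sInf_chordSlopes (hlam : 0 ≤ lam) (hge : ∀ x, 0 ≤ h x)
    (hdom : ∃ x, 0 < x ∧ h x ≠ ⊤) (hv : 0 ≤ v) :
    conj h v ≤ lam ↔ v ≤ sInf (chordSlopes lam h) := by
  rw [conj_le_iff_forall_le_chordSlopes hlam hge hv,
    le_csInf_iff ⟨0, chordSlopes_nonneg hlam hge⟩ (chordSlopes_nonempty hdom)]

lemma tau_eq_sInf_chordSlopes (hlam : 0 ≤ lam) (hge : ∀ x, 0 ≤ h x)
    (hdom : ∃ x, 0 < x ∧ h x ≠ ⊤) : tau lam h = sInf (chordSlopes lam h) := by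
  have hS : {v | 0 ≤ v ∧ conj h v ≤ lam} = Icc 0 (sInf (chordSlopes lam h)) := by
    ext v
    simp only [mem_ofPred_eq, mem_Icc]
    exact and_congr_right fun hv => conj_le_iff_le_sInf_chordSlopes hlam hge hdom hv
  rw [tau, hS, csSup_Icc]
  exact le_csInf (chordSlopes_nonempty hdom) (chordSlopes_nonneg hlam hge)

end

theorem conj_gfun_eq_zero_iff_general (lam : ℝ) (h : ℝ → EReal) (hlam : 0 < lam)
    (h0 : h 0 = 0) (hge : ∀ x : ℝ, 0 ≤ h x)
    (hdom : ∃ x : ℝ, 0 < x ∧ h x ≠ ⊤) (heven : ∀ x : ℝ, h (-x) = h x) :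
    ∀ v : ℝ, conj (gfun lam h) v = 0 ↔ |v| ≤ tau lam h := by
  intro v
  rw [conj_gfun_eq_zero_iff_conj_le hlam.le h0, ← conj_abs_of_even heven,
    conj_le_iff_le_sInf_chordSlopes hlam.le hge hdom (abs_nonneg v),
    tau_eq_sInf_chordSlopes hlam.le hge hdom]

theorem conj_gfun_eq_zero_iff (lam : ℝ) (h : ℝ → EReal) (hlam : 0 < lam)
    (h0 : h 0 = 0) (hge : ∀ x : ℝ, 0 ≤ h x)
    (hlsc : LowerSemicontinuous h) (hconv : EConvexOn h)
    (hdom : ∃ x : ℝ, 0 < x ∧ h x ≠ ⊤) (heven : ∀ x : ℝ, h (-x) = h x) :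
    ∀ v : ℝ, conj (gfun lam h) v = 0 ↔ |v| ≤ tau lam h :=
  conj_gfun_eq_zero_iff_general lam h hlam h0 hge hdom heven
end
end

section
/- If μ < +∞, then h(μ) = τμ − λ, where τ = sup{v ≥ 0 : h*(v) ≤ λ} and μ = sup{x ≥ 0 : x ∈ ∂h*(τ)}. -/
/-!
Finiteness of `μ` means that `∂h*(τ)` is nonempty and bounded above. This forces `h*(τ) = λ`:
otherwise convexity of `h*` and maximality of `τ` make `h* = +∞` to the right of `τ`, and then
`∂h*(τ)` is unbounded above. Being closed, `∂h*(τ)` contains its supremum `μ`, i.e.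
`τμ - λ = sup_y (yμ - h*(y)) = h**(μ)`. Fenchel–Young gives `h(μ) ≥ τμ - λ`, and `h(μ) ≤ h**(μ)`
because `h` is closed and convex.
-/

noncomputable section

open Set
open scoped Classical

open Filter Topology

variable {f h : ℝ → EReal}

lemma EReal.coe_mul_le_self {a : EReal} (ha : 0 ≤ a) {c : ℝ} (hc0 : 0 ≤ c) (hc1 : c ≤ 1) :
    (c : EReal) * a ≤ a := by
  induction a using EReal.rec with
  | bot => simp at ha
  | coe r => norm_cast; nlinarith [EReal.coe_nonneg.mp ha]
  | top =>
    rcases hc0.eq_or_lt with rfl | hc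
    · simp
    · rw [EReal.coe_mul_top_of_pos hc]

namespace EConvexOn

lemma apply_le_coe (hf : EConvexOn f) (hbot : ∀ x, f x ≠ ⊥) {x y a b : ℝ} (hx : f x ≠ ⊤)
    (hy : f y ≠ ⊤) (ha : 0 ≤ a) (hb : 0 ≤ b) (hab : a + b = 1) :
    f (a * x + b * y) ≤ ((a * (f x).toReal + b * (f y).toReal : ℝ) : EReal) := by
  rw [EReal.coe_add, EReal.coe_mul, EReal.coe_mul, EReal.coe_toReal hx (hbot x),
    EReal.coe_toReal hy (hbot y)]
  exact hf x y a b ha hb hab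

lemma convexOn_toReal (hf : EConvexOn f) (hbot : ∀ x, f x ≠ ⊥) :
    ConvexOn ℝ {x | f x ≠ ⊤} (fun x => (f x).toReal) := by
  refine ⟨fun x hx y hy a b ha hb hab => ?_, fun x hx y hy a b ha hb hab => ?_⟩
  · exact ne_top_of_le_ne_top (EReal.coe_ne_top _) (hf.apply_le_coe hbot hx hy ha hb hab)
  · simpa only [smul_eq_mul, EReal.toReal_coe] using
      EReal.toReal_le_toReal (hf.apply_le_coe hbot hx hy ha hb hab) (hbot _) (EReal.coe_ne_top _)

lemma exists_gt_lt (hf : EConvexOn f) (hbot : ∀ x, f x ≠ ⊥) {x y c : ℝ} (hxy : x < y)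
    (hx : f x < c) (hy : f y ≠ ⊤) : ∃ v, x < v ∧ f v < c := by
  have hxt : f x ≠ ⊤ := ne_top_of_lt hx
  have hxc : (f x).toReal < c := by rwa [← EReal.coe_lt_coe_iff, EReal.coe_toReal hxt (hbot x)]
  have hlim : Tendsto (fun s : ℝ => (1 - s) * (f x).toReal + s * (f y).toReal) (𝓝[>] 0)
      (𝓝 (f x).toReal) := by
    have hcont : Continuous (fun s : ℝ => (1 - s) * (f x).toReal + s * (f y).toReal) := by
      fun_prop
    simpa using (hcont.tendsto 0).mono_left nhdsWithin_le_nhds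
  obtain ⟨s, hsc, hs⟩ := ((hlim.eventually_lt_const hxc).and (Ioo_mem_nhdsGT one_pos)).exists
  refine ⟨(1 - s) * x + s * y, by nlinarith [hs.1], ?_⟩
  calc f ((1 - s) * x + s * y)
      ≤ (((1 - s) * (f x).toReal + s * (f y).toReal : ℝ) : EReal) :=
        hf.apply_le_coe hbot hxt hy (by linarith [hs.2]) hs.1.le (by ring)
    _ < c := EReal.coe_lt_coe_iff.2 hsc

lemma monotoneOn_Ici (hf : EConvexOn f) (h0 : f 0 = 0) (hge : ∀ x, 0 ≤ f x) :
    MonotoneOn f (Ici 0) := by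
  intro x hx y _ hxy
  rcases hxy.eq_or_lt with rfl | hlt
  · exact le_rfl
  have hy : 0 < y := (mem_Ici.1 hx).trans_lt hlt
  have ht : x / y ≤ 1 := div_le_one_of_le₀ hxy hy.le
  have hcomb := hf y 0 (x / y) (1 - x / y) (div_nonneg hx hy.le) (sub_nonneg.2 ht) (by ring)
  rw [mul_zero, add_zero, div_mul_cancel₀ x hy.ne', h0, mul_zero, add_zero] at hcomb
  exact hcomb.trans (EReal.coe_mul_le_self (hge y) (div_nonneg hx hy.le) ht)

lemma toReal_le_toReal_of_le (hf : EConvexOn f) (h0 : f 0 = 0) (hge : ∀ x, 0 ≤ f x)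
    {x y : ℝ} (hx : 0 ≤ x) (hxy : x ≤ y) (hy : f y ≠ ⊤) : (f x).toReal ≤ (f y).toReal :=
  EReal.toReal_le_toReal (hf.monotoneOn_Ici h0 hge hx (hx.trans hxy) hxy)
    (ne_bot_of_le_ne_bot EReal.zero_ne_bot (hge x)) hy

end EConvexOn

section Conjugate

lemma mul_sub_le_conj (v x : ℝ) : ((v * x : ℝ) : EReal) - h x ≤ conj h v :=
  le_iSup (fun x => ((v * x : ℝ) : EReal) - h x) x

lemma conj_nonneg (h0 : h 0 = 0) (v : ℝ) : 0 ≤ conj h v := by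
  simpa [h0] using mul_sub_le_conj (h := h) v 0

lemma conj_ne_bot (h0 : h 0 = 0) (v : ℝ) : conj h v ≠ ⊥ :=
  ne_bot_of_le_ne_bot EReal.zero_ne_bot (conj_nonneg h0 v)

lemma conj_zero (h0 : h 0 = 0) (hge : ∀ x, 0 ≤ h x) : conj h 0 = 0 := by
  refine le_antisymm (iSup_le fun x => ?_) (conj_nonneg h0 0)
  rw [zero_mul, EReal.coe_zero, zero_sub]
  exact EReal.neg_le_zero.2 (hge x)

lemma mul_sub_toReal_le (hbot : ∀ x, h x ≠ ⊥) {v x c : ℝ} (hx : h x ≠ ⊤)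
    (hc : conj h v ≤ c) : v * x - (h x).toReal ≤ c := by
  have hfy := (mul_sub_le_conj v x).trans hc
  rwa [← EReal.coe_toReal hx (hbot x), ← EReal.coe_sub, EReal.coe_le_coe_iff] at hfy

lemma coe_mul_sub_le_apply (hbot : ∀ x, h x ≠ ⊥) {v x c : ℝ} (hc : conj h v ≤ c) :
    ((v * x - c : ℝ) : EReal) ≤ h x := by
  by_cases hx : h x = ⊤
  · simp [hx]
  rw [← EReal.coe_toReal hx (hbot x), EReal.coe_le_coe_iff]
  linarith [mul_sub_toReal_le hbot hx hc]

lemma econvexOn_conj (hbot : ∀ x, h x ≠ ⊥) : EConvexOn (conj h) := by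
  intro v w a b ha hb hab
  refine iSup_le fun x => ?_
  by_cases hx : h x = ⊤
  · simp [hx]
  have hsplit : ((a * v + b * w) * x - (h x).toReal : ℝ)
      = a * (v * x - (h x).toReal) + b * (w * x - (h x).toReal) := by
    rw [show b = 1 - a by linarith]; ring
  rw [← EReal.coe_toReal hx (hbot x), ← EReal.coe_sub, hsplit, EReal.coe_add, EReal.coe_mul,
    EReal.coe_mul, EReal.coe_sub, EReal.coe_sub, EReal.coe_toReal hx (hbot x)]
  exact add_le_add (mul_le_mul_of_nonneg_left (mul_sub_le_conj v x) (EReal.coe_nonneg.2 ha))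
    (mul_le_mul_of_nonneg_left (mul_sub_le_conj w x) (EReal.coe_nonneg.2 hb))

lemma conj_le_of_forall_gt_eq_top (hge : ∀ x, 0 ≤ h x) {b : ℝ} (hb : ∀ x, b < x → h x = ⊤)
    {y : ℝ} (hy : 0 ≤ y) : conj h y ≤ ((y * b : ℝ) : EReal) := by
  refine iSup_le fun x => ?_
  by_cases hx : h x = ⊤
  · simp [hx]
  have hxb : x ≤ b := not_lt.1 fun hbx => hx (hb x hbx)
  calc ((y * x : ℝ) : EReal) - h x ≤ ((y * x : ℝ) : EReal) := by
        rw [sub_eq_add_neg]; exact add_le_of_nonpos_right (EReal.neg_le_zero.2 (hge x))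
    _ ≤ ((y * b : ℝ) : EReal) := EReal.coe_le_coe_iff.2 (mul_le_mul_of_nonneg_left hxb hy)

-- The chord of `h` over `[x, x']` lies below `h` outside `[x, x']`, and `h ≥ h x` inside it.
lemma conj_slope_le (hconv : EConvexOn h) (h0 : h 0 = 0) (hge : ∀ x, 0 ≤ h x) {x x' : ℝ}
    (hx0 : 0 ≤ x) (hxx' : x < x') (hx : h x ≠ ⊤) (hx' : h x' ≠ ⊤) :
    conj h (((h x').toReal - (h x).toReal) / (x' - x)) ≤
      (((h x').toReal - (h x).toReal) / (x' - x) * x' - (h x).toReal : ℝ) := by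
  have hbot : ∀ z, h z ≠ ⊥ := fun z => ne_bot_of_le_ne_bot EReal.zero_ne_bot (hge z)
  have hcvx := hconv.convexOn_toReal hbot
  set y := ((h x').toReal - (h x).toReal) / (x' - x)
  have hy0 : 0 ≤ y :=
    div_nonneg (sub_nonneg.2 (hconv.toReal_le_toReal_of_le h0 hge hx0 hxx'.le hx')) (by linarith)
  refine iSup_le fun z => ?_
  by_cases hz : h z = ⊤
  · simp [hz]
  rw [← EReal.coe_toReal hz (hbot z), ← EReal.coe_sub, EReal.coe_le_coe_iff]
  rcases lt_or_ge z x with hzx | hxz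
  · have hsl := hcvx.slope_mono_adjacent hz hx' hzx hxx'
    rw [div_le_iff₀ (by linarith)] at hsl
    nlinarith
  rcases le_or_gt z x' with hzx' | hx'z
  · nlinarith [hconv.toReal_le_toReal_of_le h0 hge hx0 hxz hz]
  · have hsl := hcvx.slope_mono_adjacent hx hz hxx' hx'z
    rw [le_div_iff₀ (by linarith)] at hsl
    nlinarith [hconv.toReal_le_toReal_of_le h0 hge hx0 hxx'.le hx']

end Conjugate

section Biconjugate

variable {m c : ℝ}

lemma exists_mem_Ioo_ne_top_of_mul_sub_le_conj (hconv : EConvexOn h) (h0 : h 0 = 0)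
    (hge : ∀ x, 0 ≤ h x) (hc : ∀ y, 0 ≤ y → ((y * m - c : ℝ) : EReal) ≤ conj h y) {a : ℝ}
    (ha : 0 ≤ a) (ham : a < m) : ∃ x ∈ Ioo a m, h x ≠ ⊤ := by
  by_contra! htop
  have hb : ∀ x, a < x → h x = ⊤ := fun x hx => by
    rcases lt_or_ge x m with hxm | hxm
    · exact htop x ⟨hx, hxm⟩
    · have hmid := htop ((a + m) / 2) ⟨by linarith, by linarith⟩
      exact top_le_iff.1 (hmid ▸ hconv.monotoneOn_Ici h0 hge (mem_Ici.2 (by linarith))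
        (mem_Ici.2 (by linarith)) (by linarith))
  have hy : 0 ≤ (|c| + 1) / (m - a) := by positivity
  have hle := EReal.coe_le_coe_iff.1 ((hc _ hy).trans (conj_le_of_forall_gt_eq_top hge hb hy))
  have hyma : (|c| + 1) / (m - a) * (m - a) = |c| + 1 := div_mul_cancel₀ _ (by linarith)
  nlinarith [le_abs_self c]

/-- One half of the Fenchel–Moreau theorem: a lower semicontinuous convex `h` lies below its
biconjugate. -/
lemma le_of_forall_mul_sub_le_conj (hlsc : LowerSemicontinuous h) (hconv : EConvexOn h)
    (h0 : h 0 = 0) (hge : ∀ x, 0 ≤ h x) (hm : 0 < m)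
    (hc : ∀ y, 0 ≤ y → ((y * m - c : ℝ) : EReal) ≤ conj h y) : h m ≤ c := by
  by_contra! hlt
  obtain ⟨l, hlm, hl⟩ := exists_Ioc_subset_of_mem_nhds (hlsc m c hlt) ⟨0, hm⟩
  obtain ⟨x, hx, hxt⟩ := exists_mem_Ioo_ne_top_of_mul_sub_le_conj hconv h0 hge hc
    (le_max_right l 0) (max_lt hlm hm)
  have hx0 : 0 ≤ x := (le_max_right l 0).trans hx.1.le
  obtain ⟨x', hx', hx't⟩ := exists_mem_Ioo_ne_top_of_mul_sub_le_conj hconv h0 hge hc hx0 hx.2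
  set y := ((h x').toReal - (h x).toReal) / (x' - x)
  have hy0 : 0 ≤ y := div_nonneg
    (sub_nonneg.2 (hconv.toReal_le_toReal_of_le h0 hge hx0 hx'.1.le hx't)) (by linarith [hx'.1])
  have hchord := EReal.coe_le_coe_iff.1
    ((hc y hy0).trans (conj_slope_le hconv h0 hge hx0 hx'.1 hxt hx't))
  have hcx : (c : EReal) < h x := hl ⟨(le_max_left l 0).trans_lt hx.1, hx.2.le⟩
  rw [← EReal.coe_toReal hxt (ne_bot_of_le_ne_bot EReal.zero_ne_bot (hge x)),
    EReal.coe_lt_coe_iff] at hcx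
  nlinarith [hx'.2]

end Biconjugate

section Subdifferential

variable {x d m : ℝ}

lemma mem_subdiff_of_le (hf : ∀ y, x < y → f y = ⊤) (hd : d ∈ subdiff f x) (hdm : d ≤ m) :
    m ∈ subdiff f x := by
  intro y
  rcases le_or_gt y x with hyx | hxy
  · exact (add_le_add_right (EReal.coe_le_coe_iff.2
      (show m * (y - x) ≤ d * (y - x) by nlinarith)) (f x)).trans (hd y)
  · simp [hf y hxy]

lemma mem_subdiff_of_isLUB (hx : f x ≠ ⊤) (hx' : f x ≠ ⊥) (hm : IsLUB (subdiff f x) m) :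
    m ∈ subdiff f x := by
  intro y
  obtain ⟨d, hd⟩ := hm.nonempty
  rcases le_or_gt y x with hyx | hxy
  · exact (add_le_add_right (EReal.coe_le_coe_iff.2
      (show m * (y - x) ≤ d * (y - x) by nlinarith [hm.1 hd])) (f x)).trans (hd y)
  by_cases hy : f y = ⊤
  · simp [hy]
  obtain ⟨a, ha⟩ : ∃ a : ℝ, f x = a := ⟨_, (EReal.coe_toReal hx hx').symm⟩
  obtain ⟨b, hb⟩ : ∃ b : ℝ, f y = b := ⟨_, (EReal.coe_toReal hy
    (ne_bot_of_le_ne_bot (EReal.add_ne_bot_iff.2 ⟨hx', EReal.coe_ne_bot _⟩) (hd y))).symm⟩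
  have hslope : ∀ d : ℝ, f x + ((d * (y - x) : ℝ) : EReal) ≤ f y ↔ d ≤ (b - a) / (y - x) :=
    fun d => by
      rw [ha, hb, ← EReal.coe_add, EReal.coe_le_coe_iff, le_div_iff₀ (by linarith)]
      constructor <;> intro <;> linarith
  exact (hslope m).2 (hm.2 fun d hd => (hslope d).1 (hd y))

end Subdifferential

section TauMu

variable {lam : ℝ}

lemma bddAbove_tau_set (hge : ∀ x, 0 ≤ h x) (hdom : ∃ x : ℝ, 0 < x ∧ h x ≠ ⊤) :
    BddAbove {v : ℝ | 0 ≤ v ∧ conj h v ≤ (lam : EReal)} := by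
  obtain ⟨x, hx0, hxt⟩ := hdom
  refine ⟨(lam + (h x).toReal) / x, fun v hv => ?_⟩
  rw [le_div_iff₀ hx0]
  linarith [mul_sub_toReal_le (fun x => ne_bot_of_le_ne_bot EReal.zero_ne_bot (hge x)) hxt hv.2]

lemma tau_nonneg (hlam : 0 ≤ lam) (h0 : h 0 = 0) (hge : ∀ x, 0 ≤ h x)
    (hdom : ∃ x : ℝ, 0 < x ∧ h x ≠ ⊤) : 0 ≤ tau lam h :=
  le_csSup (bddAbove_tau_set hge hdom) ⟨le_rfl, by rw [conj_zero h0 hge]; exact_mod_cast hlam⟩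

lemma conj_tau_le (hlam : 0 ≤ lam) (h0 : h 0 = 0) (hge : ∀ x, 0 ≤ h x)
    (hdom : ∃ x : ℝ, 0 < x ∧ h x ≠ ⊤) : conj h (tau lam h) ≤ lam := by
  have hbot : ∀ x, h x ≠ ⊥ := fun x => ne_bot_of_le_ne_bot EReal.zero_ne_bot (hge x)
  refine iSup_le fun x => ?_
  by_cases hx : h x = ⊤
  · simp [hx]
  rw [← EReal.coe_toReal hx (hbot x), ← EReal.coe_sub, EReal.coe_le_coe_iff]
  have hH : 0 ≤ (h x).toReal := EReal.toReal_nonneg (hge x)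
  rcases le_or_gt x 0 with hx0 | hx0
  · nlinarith [tau_nonneg hlam h0 hge hdom]
  · have hτ : tau lam h ≤ (lam + (h x).toReal) / x :=
      csSup_le ⟨0, le_rfl, by rw [conj_zero h0 hge]; exact_mod_cast hlam⟩ fun v hv => by
        rw [le_div_iff₀ hx0]
        linarith [mul_sub_toReal_le hbot hx hv.2]
    rw [le_div_iff₀ hx0] at hτ
    linarith

lemma conj_eq_top_of_conj_tau_lt (hlam : 0 ≤ lam) (h0 : h 0 = 0) (hge : ∀ x, 0 ≤ h x)
    (hdom : ∃ x : ℝ, 0 < x ∧ h x ≠ ⊤) (hlt : conj h (tau lam h) < lam) {y : ℝ}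
    (hy : tau lam h < y) : conj h y = ⊤ := by
  by_contra hyt
  have hconv := econvexOn_conj fun x => ne_bot_of_le_ne_bot EReal.zero_ne_bot (hge x)
  obtain ⟨v, hv, hvlam⟩ := hconv.exists_gt_lt (conj_ne_bot h0) hy hlt hyt
  exact hv.not_ge (le_csSup (bddAbove_tau_set hge hdom)
    ⟨(tau_nonneg hlam h0 hge hdom).trans hv.le, hvlam.le⟩)

lemma subdiff_conj_tau_nonempty (hmu : mu lam h ≠ ⊤) :
    (subdiff (conj h) (tau lam h)).Nonempty := by
  by_contra hS
  exact hmu (if_neg hS)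

lemma conj_tau_eq_of_mu_ne_top (hlam : 0 ≤ lam) (h0 : h 0 = 0) (hge : ∀ x, 0 ≤ h x)
    (hdom : ∃ x : ℝ, 0 < x ∧ h x ≠ ⊤) (hmu : mu lam h ≠ ⊤) : conj h (tau lam h) = lam := by
  by_contra hne
  have hlt := (conj_tau_le hlam h0 hge hdom).lt_of_ne hne
  obtain ⟨d, hd⟩ := subdiff_conj_tau_nonempty hmu
  refine hmu ?_
  rw [mu, if_pos ⟨d, hd⟩, EReal.eq_top_iff_forall_lt]
  intro M
  have hmem : max d (max 0 (M + 1)) ∈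
      {x : ℝ | 0 ≤ x ∧ x ∈ subdiff (conj h) (tau lam h)} :=
    ⟨(le_max_left _ _).trans (le_max_right _ _),
      mem_subdiff_of_le (fun y hy => conj_eq_top_of_conj_tau_lt hlam h0 hge hdom hlt hy) hd
        (le_max_left _ _)⟩
  refine (EReal.coe_lt_coe_iff.2 ?_).trans_le (le_sSup (mem_image_of_mem _ hmem))
  linarith [(le_max_right 0 (M + 1)).trans (le_max_right d _)]

lemma pos_of_mem_subdiff_conj_tau (hlam : 0 < lam) (h0 : h 0 = 0) (hge : ∀ x, 0 ≤ h x)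
    (hdom : ∃ x : ℝ, 0 < x ∧ h x ≠ ⊤) (hτ : conj h (tau lam h) = lam) {d : ℝ}
    (hd : d ∈ subdiff (conj h) (tau lam h)) : 0 < d := by
  have h1 := hd 0
  rw [hτ, conj_zero h0 hge, ← EReal.coe_add, ← EReal.coe_zero, EReal.coe_le_coe_iff] at h1
  by_contra! hd0
  nlinarith [tau_nonneg hlam.le h0 hge hdom]

lemma isLUB_subdiff_conj_tau (hlam : 0 < lam) (h0 : h 0 = 0) (hge : ∀ x, 0 ≤ h x)
    (hdom : ∃ x : ℝ, 0 < x ∧ h x ≠ ⊤) (hmu : mu lam h ≠ ⊤) :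
    IsLUB (subdiff (conj h) (tau lam h)) (mu lam h).toReal := by
  have hS := subdiff_conj_tau_nonempty hmu
  have hτ := conj_tau_eq_of_mu_ne_top hlam.le h0 hge hdom hmu
  have hsep : {x : ℝ | 0 ≤ x ∧ x ∈ subdiff (conj h) (tau lam h)} = subdiff (conj h) (tau lam h) :=
    Set.ext fun d => ⟨And.right,
      fun hd => ⟨(pos_of_mem_subdiff_conj_tau hlam h0 hge hdom hτ hd).le, hd⟩⟩
  have hlub : IsLUB ((fun x : ℝ => (x : EReal)) '' subdiff (conj h) (tau lam h)) (mu lam h) := by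
    rw [mu, if_pos hS, hsep]
    exact isLUB_sSup _
  obtain ⟨d, hd⟩ := hS
  have hbot : mu lam h ≠ ⊥ :=
    ne_bot_of_le_ne_bot (EReal.coe_ne_bot d) (hlub.1 (mem_image_of_mem _ hd))
  rw [← EReal.coe_toReal hmu hbot] at hlub
  exact hlub.of_image EReal.coe_le_coe_iff

end TauMu

theorem pert_decomposition_at_mu (lam : ℝ) (h : ℝ → EReal) (hlam : 0 < lam)
    (h0 : h 0 = 0) (hge : ∀ x : ℝ, 0 ≤ h x)
    (hlsc : LowerSemicontinuous h) (hconv : EConvexOn h)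
    (hdom : ∃ x : ℝ, 0 < x ∧ h x ≠ ⊤) :
    mu lam h < ⊤ →
      h (mu lam h).toReal = ((tau lam h * (mu lam h).toReal - lam : ℝ) : EReal) := by
  intro hmu
  have hτ := conj_tau_eq_of_mu_ne_top hlam.le h0 hge hdom hmu.ne
  have hm : (mu lam h).toReal ∈ subdiff (conj h) (tau lam h) :=
    mem_subdiff_of_isLUB (hτ ▸ EReal.coe_ne_top lam) (hτ ▸ EReal.coe_ne_bot lam)
      (isLUB_subdiff_conj_tau hlam h0 hge hdom hmu.ne)
  refine le_antisymm (le_of_forall_mul_sub_le_conj hlsc hconv h0 hge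
    (pos_of_mem_subdiff_conj_tau hlam h0 hge hdom hτ hm) fun y _ => ?_)
    (coe_mul_sub_le_apply (fun x => ne_bot_of_le_ne_bot EReal.zero_ne_bot (hge x)) hτ.le)
  have hy := hm y
  rw [hτ, ← EReal.coe_add] at hy
  convert hy using 2
  ring
end
end
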